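/- arXiv:2208.03113 — 2 statements merged into one kernel-verified Lean document; each statement's English description precedes it below -/
import Mathlib

section
/- Lemma (large alignment forces a large extreme-degree Fourier coefficient; quantitative core of Lemma D.2). Let d ≥ 1, f : H_d → ℝ, and let C be a natural number with d ≥ 2C + 2. Then max_{0 ≤ k ≤ d} C(d,k)^{−1} Σ_{S ⊆ [d], |S| = k} f̂(S)² ≤ Σ_{S ⊆ [d] : min(|S|, d−|S|) ≤ C} f̂(S)² + C(d, C+1)^{−1}·‖f‖²_{L²(H_d)}, where C(d,k) denotes the binomial coefficient. -/
open scoped BigOperators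

noncomputable section

/-- A Boolean bit viewed as a sign in `{+1, -1}` (`true ↦ +1`). -/
def sgn (b : Bool) : ℝ := if b then 1 else -1

/-- Expectation over the uniform measure on the hypercube `H_d = {+1,-1}^d`. -/
def hcE {d : ℕ} (f : (Fin d → Bool) → ℝ) : ℝ := (∑ x : Fin d → Bool, f x) / 2 ^ d

/-- The parity (Fourier character) `χ_S(x) = ∏_{i∈S} x_i`. -/
def chi {d : ℕ} (S : Finset (Fin d)) (x : Fin d → Bool) : ℝ := ∏ i ∈ S, sgn (x i)

/-- The Fourier coefficient `f̂(S) = E_{x∼H_d}[f(x)χ_S(x)]`. -/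
def fourierCoef {d : ℕ} (f : (Fin d → Bool) → ℝ) (S : Finset (Fin d)) : ℝ :=
  hcE fun x => f x * chi S x

lemma chi_sum {d : ℕ} (x y : Fin d → Bool) :
    ∑ S : Finset (Fin d), chi S x * chi S y = if x = y then (2:ℝ)^d else 0 := by
  have h1 : ∀ S : Finset (Fin d), chi S x * chi S y
      = ∏ i ∈ S, (sgn (x i) * sgn (y i)) := by
    intro S; simp [chi, Finset.prod_mul_distrib]
  simp_rw [h1]
  have h2 : ∑ S : Finset (Fin d), ∏ i ∈ S, (sgn (x i) * sgn (y i))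
      = ∏ i : Fin d, (sgn (x i) * sgn (y i) + 1) := by
    rw [Finset.prod_add]
    simp [← Finset.powerset_univ]
  rw [h2]
  have h3 : ∀ i, sgn (x i) * sgn (y i) + 1 = if x i = y i then 2 else 0 := by
    intro i; cases hx : x i <;> cases hy : y i <;> simp [sgn] <;> norm_num
  simp_rw [h3]
  by_cases h : x = y
  · subst h; simp
  · simp only [h, if_false]
    obtain ⟨i, hi⟩ := Function.ne_iff.mp h
    exact Finset.prod_eq_zero (Finset.mem_univ i) (by simp [hi])

lemma parseval {d : ℕ} (f : (Fin d → Bool) → ℝ) :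
    ∑ S : Finset (Fin d), fourierCoef f S ^ 2 = hcE (fun x => f x ^ 2) := by
  have step : ∀ S : Finset (Fin d), fourierCoef f S ^ 2
      = (∑ x : Fin d → Bool, ∑ y : Fin d → Bool,
          (f x * f y) * (chi S x * chi S y)) / (2^d * 2^d) := by
    intro S
    have hs : (∑ x : Fin d → Bool, f x * chi S x) ^ 2
        = ∑ x : Fin d → Bool, ∑ y : Fin d → Bool,
            (f x * f y) * (chi S x * chi S y) := by
      rw [sq, Finset.sum_mul_sum]
      exact Finset.sum_congr rfl fun x _ => Finset.sum_congr rfl fun y _ => by ring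
    rw [fourierCoef, hcE, div_pow, hs, sq]
  simp_rw [step, ← Finset.sum_div]
  rw [Finset.sum_comm]
  have : ∀ x : Fin d → Bool, ∑ S : Finset (Fin d), ∑ y : Fin d → Bool,
      (f x * f y) * (chi S x * chi S y) = f x ^ 2 * 2 ^ d := by
    intro x
    rw [Finset.sum_comm]
    have : ∀ y : Fin d → Bool, ∑ S : Finset (Fin d), (f x * f y) * (chi S x * chi S y)
        = (f x * f y) * (if x = y then (2:ℝ)^d else 0) := by
      intro y; rw [← Finset.mul_sum, chi_sum]
    simp_rw [this, mul_ite, mul_zero]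
    rw [Finset.sum_ite_eq Finset.univ x (fun y => f x * f y * 2^d)]
    simp [sq]
  simp_rw [this]
  rw [hcE, ← Finset.sum_mul]
  field_simp

lemma choose_mono_half {n a b : ℕ} (hab : a ≤ b) (hb : 2 * b ≤ n) :
    n.choose a ≤ n.choose b := by
  induction b with
  | zero => simp_all
  | succ m ih =>
    rcases Nat.lt_or_ge a (m+1) with h | h
    · have hm : m < n / 2 := by omega
      exact le_trans (ih (by omega) (by omega)) (Nat.choose_le_succ_of_lt_half_left hm)
    · have : a = m + 1 := le_antisymm hab h
      simp [this]

/-- **Quantitative core of Lemma D.2 (large alignment forces a large extreme-degree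
Fourier coefficient).** For `d ≥ 2C + 2`:
`max_k C(d,k)⁻¹ Σ_{|S|=k} f̂(S)²
   ≤ Σ_{min(|S|, d−|S|) ≤ C} f̂(S)² + C(d, C+1)⁻¹ ‖f‖²`. -/
theorem stmt_9 {d : ℕ} (f : (Fin d → Bool) → ℝ) (C : ℕ) (hC : 2 * C + 2 ≤ d) :
    (Finset.range (d + 1)).sup' ⟨0, Finset.mem_range.mpr d.succ_pos⟩
        (fun k => ((d.choose k : ℝ))⁻¹ *
          ∑ S ∈ Finset.univ.filter (fun S : Finset (Fin d) => S.card = k),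
            fourierCoef f S ^ 2)
      ≤ (∑ S ∈ Finset.univ.filter
              (fun S : Finset (Fin d) => min S.card (d - S.card) ≤ C),
            fourierCoef f S ^ 2)
        + ((d.choose (C + 1) : ℝ))⁻¹ * hcE (fun x => f x ^ 2) := by
  have hA : (0:ℝ) ≤ ∑ S ∈ Finset.univ.filter
      (fun S : Finset (Fin d) => min S.card (d - S.card) ≤ C), fourierCoef f S ^ 2 :=
    Finset.sum_nonneg fun S _ => sq_nonneg _
  have hE : (0:ℝ) ≤ hcE (fun x => f x ^ 2) := by
    rw [← parseval]; exact Finset.sum_nonneg fun S _ => sq_nonneg _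
  have hB : (0:ℝ) ≤ ((d.choose (C + 1) : ℝ))⁻¹ * hcE (fun x => f x ^ 2) :=
    mul_nonneg (by positivity) hE
  apply Finset.sup'_le
  intro k hk
  have hkd : k ≤ d := Nat.lt_succ_iff.mp (Finset.mem_range.mp hk)
  have hSk : (0:ℝ) ≤ ∑ S ∈ Finset.univ.filter
      (fun S : Finset (Fin d) => S.card = k), fourierCoef f S ^ 2 :=
    Finset.sum_nonneg fun S _ => sq_nonneg _
  rcases le_or_gt (min k (d - k)) C with hcase | hcase
  · -- extreme degree: absorbed in first sum
    calc ((d.choose k : ℝ))⁻¹ * ∑ S ∈ Finset.univ.filter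
          (fun S : Finset (Fin d) => S.card = k), fourierCoef f S ^ 2
        ≤ ∑ S ∈ Finset.univ.filter
          (fun S : Finset (Fin d) => S.card = k), fourierCoef f S ^ 2 := by
          apply mul_le_of_le_one_left hSk
          rw [inv_le_one_iff₀]
          right
          exact_mod_cast Nat.one_le_iff_ne_zero.mpr (Nat.choose_pos hkd).ne'
      _ ≤ ∑ S ∈ Finset.univ.filter
          (fun S : Finset (Fin d) => min S.card (d - S.card) ≤ C), fourierCoef f S ^ 2 := by
          apply Finset.sum_le_sum_of_subset_of_nonneg
          · intro S hS
            simp only [Finset.mem_filter, Finset.mem_univ, true_and] at *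
            rw [hS]; exact hcase
          · intro S _ _; exact sq_nonneg _
      _ ≤ _ := le_add_of_nonneg_right hB
  · -- middle degrees
    have hchoose : d.choose (C + 1) ≤ d.choose k := by
      rcases le_total k (d - k) with h | h
      · exact choose_mono_half (by omega) (by omega)
      · calc d.choose (C+1) ≤ d.choose (d - k) := choose_mono_half (by omega) (by omega)
          _ = d.choose k := Nat.choose_symm hkd
    have h2 : ∑ S ∈ Finset.univ.filter
        (fun S : Finset (Fin d) => S.card = k), fourierCoef f S ^ 2
        ≤ hcE (fun x => f x ^ 2) := by
      rw [← parseval]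
      exact Finset.sum_le_sum_of_subset_of_nonneg (Finset.filter_subset _ _)
        (fun S _ _ => sq_nonneg _)
    calc ((d.choose k : ℝ))⁻¹ * ∑ S ∈ Finset.univ.filter
          (fun S : Finset (Fin d) => S.card = k), fourierCoef f S ^ 2
        ≤ ((d.choose (C + 1) : ℝ))⁻¹ * hcE (fun x => f x ^ 2) := by
          apply mul_le_mul _ h2 hSk (by positivity)
          apply inv_anti₀
          · exact_mod_cast Nat.choose_pos (by omega)
          · exact_mod_cast hchoose
      _ ≤ _ := le_add_of_nonneg_left hA

end
end

section
/- Lemma (evaluation of the coefficients c_{S,S'} in the weak-learning analysis). Let d ≥ 1 and S, S' ⊆ [d]. Let a, x be independent and uniform on H_d, and define c_{S,S'} = E_{a,x}[ χ_S(a)·χ_{S'}(x)·𝟙{ Σ_{i∈S} a_i x_i ∈ {0,1} } ]. Then c_{S,S'} = 0 whenever S ≠ S', and c_{S,S} = (−1)^{⌊|S|/2⌋}·C(|S|, ⌊|S|/2⌋)·2^{−|S|}, where C(n,k) is the binomial coefficient. In particular |c_{S,S}| = P_{x∼H_d}[ Σ_{i∈S} x_i ∈ {0,1} ]. -/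
open scoped BigOperators

noncomputable section

/-- The coefficient `c_{S,S'} = E_{a,x}[χ_S(a) χ_{S'}(x) 𝟙{Σ_{i∈S} a_i x_i ∈ {0,1}}]`,
with `a, x` independent and uniform on `H_d`. -/
def cCoef {d : ℕ} (S S' : Finset (Fin d)) : ℝ :=
  hcE fun a => hcE fun x =>
    chi S a * chi S' x *
      (if (∑ i ∈ S, sgn (a i) * sgn (x i)) = 0 ∨ (∑ i ∈ S, sgn (a i) * sgn (x i)) = 1
        then 1 else 0)

lemma sgn_mul_self (b : Bool) : sgn b * sgn b = 1 := by cases b <;> simp [sgn]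

lemma sgn_beq (a b : Bool) : sgn (a == b) = sgn a * sgn b := by
  cases a <;> cases b <;> simp [sgn]

lemma chi_mul_self {d : ℕ} (T : Finset (Fin d)) (a : Fin d → Bool) :
    chi T a * chi T a = 1 := by
  rw [chi, ← Finset.prod_mul_distrib]
  exact Finset.prod_eq_one fun i _ => sgn_mul_self _

lemma sum_fun_card {α : Type*} [Fintype α] [DecidableEq α] (f : ℕ → ℝ) :
    ∑ z : α → Bool, f (Finset.univ.filter (fun i => z i = true)).card
      = ∑ j ∈ Finset.range (Fintype.card α + 1), ((Fintype.card α).choose j : ℝ) * f j := by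
  have hbij : Function.Bijective (fun z : α → Bool => Finset.univ.filter (fun i => z i = true)) := by
    constructor
    · intro z w h
      funext i
      have := Finset.ext_iff.mp h i
      simpa using this
    · intro B
      exact ⟨fun i => i ∈ B, by ext i; simp⟩
  calc ∑ z : α → Bool, f (Finset.univ.filter fun i => z i = true).card
      = ∑ B : Finset α, f B.card :=
        Fintype.sum_bijective _ hbij _ _ (fun z => rfl)
    _ = ∑ B ∈ (Finset.univ : Finset α).powerset, f B.card := by rw [Finset.powerset_univ]
    _ = ∑ j ∈ Finset.range (Fintype.card α + 1), ((Fintype.card α).choose j : ℝ) * f j := by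
        rw [Finset.sum_powerset_apply_card]
        simp [Finset.card_univ, nsmul_eq_mul]

lemma prod_sgn_eq {d : ℕ} (S : Finset (Fin d)) (y : Fin d → Bool) :
    chi S y = (-1 : ℝ) ^ (S.card - (S.filter (fun i => y i = true)).card) := by
  rw [chi, ← Finset.prod_filter_mul_prod_filter_not S (fun i => y i = true)]
  have h1 : ∏ i ∈ S.filter (fun i => y i = true), sgn (y i) = 1 := by
    refine Finset.prod_eq_one fun i hi => ?_
    rw [Finset.mem_filter] at hi
    simp [sgn, hi.2]
  have h2 : ∏ i ∈ S.filter (fun i => ¬ y i = true), sgn (y i)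
      = (-1 : ℝ) ^ (S.filter (fun i => ¬ y i = true)).card := by
    refine Finset.prod_eq_pow_card fun i hi => ?_
    rw [Finset.mem_filter] at hi
    simp [sgn, hi.2]
  have h3 : (S.filter (fun i => ¬ y i = true)).card
      = S.card - (S.filter (fun i => y i = true)).card := by
    have := Finset.card_filter_add_card_filter_not (s := S) (p := fun i => y i = true)
    omega
  rw [h1, h2, h3, one_mul]

lemma sum_sgn_eq {d : ℕ} (S : Finset (Fin d)) (y : Fin d → Bool) :
    (∑ i ∈ S, sgn (y i)) = 2 * ((S.filter (fun i => y i = true)).card : ℝ) - S.card := by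
  rw [← Finset.sum_filter_add_sum_filter_not S (fun i => y i = true)]
  have h1 : ∑ i ∈ S.filter (fun i => y i = true), sgn (y i)
      = ((S.filter (fun i => y i = true)).card : ℝ) := by
    rw [Finset.sum_congr rfl (fun i hi => ?_), Finset.sum_const, nsmul_eq_mul, mul_one]
    rw [Finset.mem_filter] at hi; simp [sgn, hi.2]
  have h2 : ∑ i ∈ S.filter (fun i => ¬ y i = true), sgn (y i)
      = -((S.filter (fun i => ¬ y i = true)).card : ℝ) := by
    rw [Finset.sum_congr rfl (fun i hi => ?_), Finset.sum_const, nsmul_eq_mul, mul_neg_one]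
    rw [Finset.mem_filter] at hi; simp [sgn, hi.2]
  have h3 : (S.filter (fun i => y i = true)).card + (S.filter (fun i => ¬ y i = true)).card
      = S.card := Finset.card_filter_add_card_filter_not _
  have h4 : ((S.filter (fun i => y i = true)).card : ℝ)
      + ((S.filter (fun i => ¬ y i = true)).card : ℝ) = (S.card : ℝ) := by
    exact_mod_cast congrArg (Nat.cast : ℕ → ℝ) h3
  rw [h1, h2]; linarith

lemma sum_pi_restrict {d : ℕ} (S : Finset (Fin d)) (f : ℕ → ℝ) :
    ∑ y : Fin d → Bool, f ((S.filter (fun i => y i = true)).card)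
      = 2 ^ (d - S.card) * ∑ j ∈ Finset.range (S.card + 1), (S.card.choose j : ℝ) * f j := by
  classical
  set e : (Fin d → Bool) ≃ _ :=
    Equiv.piEquivPiSubtypeProd (fun i : Fin d => i ∈ S) (fun _ => Bool) with he
  rw [← Equiv.sum_comp e.symm (fun y => f ((S.filter (fun i => y i = true)).card))]
  rw [Fintype.sum_prod_type]
  have key : ∀ (z : {i : Fin d // i ∈ S} → Bool) (w : {i : Fin d // ¬ i ∈ S} → Bool),
      (S.filter (fun i => (e.symm (z, w)) i = true)).card
        = (Finset.univ.filter (fun i : {i : Fin d // i ∈ S} => z i = true)).card := by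
    intro z w
    have hzP : ∀ i : {i : Fin d // i ∈ S}, (e.symm (z, w)) ↑i = z i := by
      intro i
      rw [he]
      simp [Equiv.piEquivPiSubtypeProd, i.2]
    have hcard := congrArg Finset.card
      (Finset.filter_attach (fun i => (e.symm (z, w)) i = true) S)
    rw [Finset.card_map, Finset.card_attach] at hcard
    rw [Finset.univ_eq_attach, ← hcard]
    congr 1
    refine Finset.filter_congr fun i _ => ?_
    rw [hzP i]
  simp_rw [key]
  have hw : Fintype.card ({i : Fin d // ¬ i ∈ S} → Bool) = 2 ^ (d - S.card) := by
    rw [Fintype.card_fun, Fintype.card_bool, Fintype.card_subtype_compl]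
    rw [Fintype.card_coe, Fintype.card_fin]
  have hstep : ∀ z : {i : Fin d // i ∈ S} → Bool,
      (∑ _w : {i : Fin d // ¬ i ∈ S} → Bool,
        f ((Finset.univ.filter (fun i : {i : Fin d // i ∈ S} => z i = true)).card))
      = (2 : ℝ) ^ (d - S.card)
          * f ((Finset.univ.filter (fun i : {i : Fin d // i ∈ S} => z i = true)).card) := by
    intro z
    rw [Finset.sum_const, nsmul_eq_mul, Finset.card_univ, hw]
    push_cast
    ring
  simp_rw [hstep]
  rw [← Finset.mul_sum]
  congr 1
  rw [sum_fun_card, Fintype.card_coe]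

lemma range_ind_sum (n : ℕ) (c : ℕ → ℝ) :
    (∑ j ∈ Finset.range (n + 1),
        c j * (if 2 * (j : ℝ) - n = 0 ∨ 2 * (j : ℝ) - n = 1 then 1 else 0))
      = c ((n + 1) / 2) := by
  have hmem : (n + 1) / 2 ∈ Finset.range (n + 1) := Finset.mem_range.mpr (by omega)
  have hzero : ∀ j ∈ Finset.range (n + 1), j ≠ (n + 1) / 2 →
      c j * (if 2 * (j : ℝ) - n = 0 ∨ 2 * (j : ℝ) - n = 1 then 1 else 0) = 0 := by
    intro j _ hne
    rw [if_neg, mul_zero]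
    rintro (h | h)
    · have h' : 2 * j = n := by exact_mod_cast (by push_cast; linarith : ((2 * j : ℕ) : ℝ) = (n : ℝ))
      omega
    · have h' : 2 * j = n + 1 := by
        exact_mod_cast (by push_cast; linarith : ((2 * j : ℕ) : ℝ) = ((n + 1 : ℕ) : ℝ))
      omega
  have htrue : 2 * (((n + 1) / 2 : ℕ) : ℝ) - n = 0 ∨ 2 * (((n + 1) / 2 : ℕ) : ℝ) - n = 1 := by
    have h2 : 2 * ((n + 1) / 2) = n ∨ 2 * ((n + 1) / 2) = n + 1 := by omega
    rcases h2 with h | h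
    · left
      have := congrArg (Nat.cast : ℕ → ℝ) h
      push_cast at this
      linarith
    · right
      have := congrArg (Nat.cast : ℕ → ℝ) h
      push_cast at this
      linarith
  rw [Finset.sum_eq_single_of_mem _ hmem hzero, if_pos htrue, mul_one]

lemma sum_chi_zero {d : ℕ} (T : Finset (Fin d)) (hT : T.Nonempty) :
    ∑ a : Fin d → Bool, chi T a = 0 := by
  obtain ⟨i0, hi0⟩ := hT
  set σ : (Fin d → Bool) → (Fin d → Bool) := fun a => Function.update a i0 (!(a i0)) with hσ
  have hinv : Function.Involutive σ := by
    intro a; funext i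
    by_cases h : i = i0
    · subst h; simp [σ]
    · simp [σ, Function.update_of_ne h]
  have h1 : ∑ a : Fin d → Bool, chi T a = ∑ a : Fin d → Bool, chi T (σ a) :=
    (Equiv.sum_comp hinv.toPerm (chi T)).symm
  have h2 : ∀ a, chi T (σ a) = - chi T a := by
    intro a
    rw [chi, chi, ← Finset.mul_prod_erase T _ hi0, ← Finset.mul_prod_erase T _ hi0]
    have hupd : ∀ i ∈ T.erase i0, sgn (σ a i) = sgn (a i) := by
      intro i hi
      rw [Finset.mem_erase] at hi
      simp [σ, Function.update_of_ne hi.1]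
    rw [Finset.prod_congr rfl hupd]
    have hflip : sgn (σ a i0) = - sgn (a i0) := by
      simp only [σ, Function.update_self]
      cases a i0 <;> simp [sgn]
    rw [hflip]; ring
  have h3 : ∑ a : Fin d → Bool, chi T (σ a) = - ∑ a : Fin d → Bool, chi T a := by
    rw [← Finset.sum_neg_distrib]
    exact Finset.sum_congr rfl fun a _ => h2 a
  rw [h3] at h1
  linarith

lemma sum_chi_mul {d : ℕ} (S S' : Finset (Fin d)) :
    ∑ a : Fin d → Bool, chi S a * chi S' a = if S = S' then (2 : ℝ) ^ d else 0 := by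
  classical
  have hsplit : ∀ a, chi S a * chi S' a = chi (symmDiff S S') a := by
    intro a
    have h1 : chi S a * chi S' a = chi (S ∪ S') a * chi (S ∩ S') a := by
      rw [chi, chi, chi, chi, Finset.prod_union_inter]
    have hdisj : Disjoint (symmDiff S S') (S ∩ S') := disjoint_symmDiff_inf S S'
    have h2 : chi (S ∪ S') a = chi (symmDiff S S') a * chi (S ∩ S') a := by
      rw [chi, chi, chi, ← Finset.prod_union hdisj]
      congr 1
      exact (symmDiff_sup_inf S S').symm
    rw [h1, h2, mul_assoc, chi_mul_self, mul_one]
  simp_rw [hsplit]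
  by_cases h : S = S'
  · subst h
    rw [if_pos rfl]
    have : symmDiff S S = (∅ : Finset (Fin d)) := symmDiff_self S
    simp_rw [this]
    simp [chi, Finset.card_univ]
  · rw [if_neg h]
    apply sum_chi_zero
    rw [Finset.nonempty_iff_ne_empty]
    intro hc
    exact h (symmDiff_eq_bot.mp hc)

lemma subst_lemma {d : ℕ} (S S' : Finset (Fin d)) (a : Fin d → Bool) :
    (∑ x : Fin d → Bool, chi S a * chi S' x *
        (if (∑ i ∈ S, sgn (a i) * sgn (x i)) = 0 ∨ (∑ i ∈ S, sgn (a i) * sgn (x i)) = 1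
          then 1 else 0))
      = chi S a * chi S' a *
          ∑ y : Fin d → Bool, chi S' y *
            (if (∑ i ∈ S, sgn (y i)) = 0 ∨ (∑ i ∈ S, sgn (y i)) = 1 then 1 else 0) := by
  rw [Finset.mul_sum]
  set σ : (Fin d → Bool) → (Fin d → Bool) := fun x i => (a i == x i) with hσ
  have hinv : Function.Involutive σ := by
    intro x; funext i
    simp only [σ]
    cases a i <;> cases x i <;> rfl
  rw [← Equiv.sum_comp hinv.toPerm
    (fun y => chi S a * chi S' a * (chi S' y *
      (if (∑ i ∈ S, sgn (y i)) = 0 ∨ (∑ i ∈ S, sgn (y i)) = 1 then 1 else 0)))]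
  refine Finset.sum_congr rfl fun x _ => ?_
  show chi S a * chi S' x *
      (if (∑ i ∈ S, sgn (a i) * sgn (x i)) = 0 ∨ (∑ i ∈ S, sgn (a i) * sgn (x i)) = 1
        then 1 else 0)
    = chi S a * chi S' a * (chi S' (σ x) *
      (if (∑ i ∈ S, sgn (σ x i)) = 0 ∨ (∑ i ∈ S, sgn (σ x i)) = 1 then 1 else 0))
  have hs : ∀ i, sgn (σ x i) = sgn (a i) * sgn (x i) := fun i => sgn_beq _ _
  have hsum : (∑ i ∈ S, sgn (σ x i)) = ∑ i ∈ S, sgn (a i) * sgn (x i) :=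
    Finset.sum_congr rfl fun i _ => hs i
  have hchi : chi S' (σ x) = chi S' a * chi S' x := by
    rw [chi, Finset.prod_congr rfl (fun i _ => hs i), Finset.prod_mul_distrib]
    rfl
  rw [hsum, hchi]
  have hsq := chi_mul_self S' a
  set I : ℝ := (if (∑ i ∈ S, sgn (a i) * sgn (x i)) = 0 ∨ (∑ i ∈ S, sgn (a i) * sgn (x i)) = 1
    then (1:ℝ) else 0) with hI
  linear_combination (-(chi S a * chi S' x * I)) * hsq

lemma cCoef_eq {d : ℕ} (S S' : Finset (Fin d)) :
    cCoef S S' = (if S = S' then (2 : ℝ) ^ d else 0) *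
      (∑ y : Fin d → Bool, chi S' y *
        (if (∑ i ∈ S, sgn (y i)) = 0 ∨ (∑ i ∈ S, sgn (y i)) = 1 then 1 else 0))
      / 2 ^ d / 2 ^ d := by
  simp only [cCoef, hcE]
  simp_rw [subst_lemma S S']
  rw [← Finset.sum_div, ← Finset.sum_mul, sum_chi_mul]


/-- **Evaluation of the coefficients `c_{S,S'}` in the weak-learning analysis.**
`c_{S,S'} = 0` for `S ≠ S'`, `c_{S,S} = (−1)^{⌊|S|/2⌋} C(|S|, ⌊|S|/2⌋) 2^{−|S|}`, and
`|c_{S,S}| = P_{x∼H_d}[Σ_{i∈S} x_i ∈ {0,1}]`. -/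
theorem stmt_13 {d : ℕ} (hd : 1 ≤ d) (S S' : Finset (Fin d)) :
    (S ≠ S' → cCoef S S' = 0)
    ∧ cCoef S S
        = (-1 : ℝ) ^ (S.card / 2) * (S.card.choose (S.card / 2) : ℝ)
            * ((2 : ℝ) ^ S.card)⁻¹
    ∧ |cCoef S S|
        = hcE (fun x =>
            if (∑ i ∈ S, sgn (x i)) = 0 ∨ (∑ i ∈ S, sgn (x i)) = 1 then 1 else 0) := by
  classical
  set n := S.card with hn
  have hnd : n ≤ d := by
    have := Finset.card_le_univ S
    simpa [hn] using this
  have h2d : (2 : ℝ) ^ d ≠ 0 := by positivity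
  have hpow : (2 : ℝ) ^ (d - n) * 2 ^ n = 2 ^ d := by
    rw [← pow_add]; congr 1; omega
  have hchoose : n.choose ((n + 1) / 2) = n.choose (n / 2) := by
    have h : n / 2 = n - (n + 1) / 2 := by omega
    rw [h, Nat.choose_symm (by omega)]
  have hK0 : (∑ y : Fin d → Bool, chi S y *
        (if (∑ i ∈ S, sgn (y i)) = 0 ∨ (∑ i ∈ S, sgn (y i)) = 1 then 1 else 0))
      = 2 ^ (d - n) * ((-1 : ℝ) ^ (n / 2) * (n.choose (n / 2) : ℝ)) := by
    have hrw : ∀ y : Fin d → Bool, chi S y *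
        (if (∑ i ∈ S, sgn (y i)) = 0 ∨ (∑ i ∈ S, sgn (y i)) = 1 then (1:ℝ) else 0)
        = (fun j => (-1 : ℝ) ^ (n - j) *
            (if 2 * (j : ℝ) - n = 0 ∨ 2 * (j : ℝ) - n = 1 then (1:ℝ) else 0))
          ((S.filter (fun i => y i = true)).card) := by
      intro y
      simp only
      rw [prod_sgn_eq, sum_sgn_eq, hn]
    rw [Finset.sum_congr rfl fun y _ => hrw y,
      sum_pi_restrict S (fun j => (-1 : ℝ) ^ (n - j) *
        (if 2 * (j : ℝ) - n = 0 ∨ 2 * (j : ℝ) - n = 1 then (1:ℝ) else 0))]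
    congr 1
    have hregroup : (∑ j ∈ Finset.range (n + 1), (n.choose j : ℝ) *
          ((-1 : ℝ) ^ (n - j) *
            (if 2 * (j : ℝ) - n = 0 ∨ 2 * (j : ℝ) - n = 1 then (1:ℝ) else 0)))
        = ∑ j ∈ Finset.range (n + 1), ((n.choose j : ℝ) * (-1 : ℝ) ^ (n - j)) *
            (if 2 * (j : ℝ) - n = 0 ∨ 2 * (j : ℝ) - n = 1 then (1:ℝ) else 0) := by
      refine Finset.sum_congr rfl fun j _ => by ring
    rw [hregroup, range_ind_sum n (fun j => (n.choose j : ℝ) * (-1 : ℝ) ^ (n - j))]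
    have h1 : n - (n + 1) / 2 = n / 2 := by omega
    rw [h1, hchoose]
    ring
  have hc2 : cCoef S S
      = (-1 : ℝ) ^ (n / 2) * (n.choose (n / 2) : ℝ) * ((2 : ℝ) ^ n)⁻¹ := by
    rw [cCoef_eq, if_pos rfl, hK0, mul_div_assoc, mul_div_cancel_left₀ _ h2d]
    rw [div_eq_iff h2d]
    field_simp
    linear_combination (n.choose (n / 2) : ℝ) * hpow
  refine ⟨fun hne => ?_, hc2, ?_⟩
  · rw [cCoef_eq, if_neg hne]
    ring
  · have habs : |cCoef S S| = (n.choose (n / 2) : ℝ) * ((2 : ℝ) ^ n)⁻¹ := by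
      rw [hc2, abs_mul, abs_mul, abs_pow, abs_neg, abs_one, one_pow, one_mul,
        Nat.abs_cast, abs_of_pos (by positivity : (0:ℝ) < ((2 : ℝ) ^ n)⁻¹)]
    have hrhs : hcE (fun x =>
          if (∑ i ∈ S, sgn (x i)) = 0 ∨ (∑ i ∈ S, sgn (x i)) = 1 then 1 else 0)
        = (n.choose (n / 2) : ℝ) * ((2 : ℝ) ^ n)⁻¹ := by
      rw [hcE]
      have hrw : ∀ y : Fin d → Bool,
          (if (∑ i ∈ S, sgn (y i)) = 0 ∨ (∑ i ∈ S, sgn (y i)) = 1 then (1:ℝ) else 0)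
          = (fun j => (if 2 * (j : ℝ) - n = 0 ∨ 2 * (j : ℝ) - n = 1 then (1:ℝ) else 0))
            ((S.filter (fun i => y i = true)).card) := by
        intro y
        simp only
        rw [sum_sgn_eq, hn]
      rw [Finset.sum_congr rfl fun y _ => hrw y,
        sum_pi_restrict S (fun j =>
          (if 2 * (j : ℝ) - n = 0 ∨ 2 * (j : ℝ) - n = 1 then (1:ℝ) else 0))]
      rw [← hn, range_ind_sum n (fun j => (n.choose j : ℝ)), hchoose]
      rw [div_eq_iff h2d]
      field_simp
      linear_combination (n.choose (n / 2) : ℝ) * hpow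
    rw [habs, hrhs]


end
end
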